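/- arXiv:1009.0060 — 3 statements merged into one kernel-verified Lean document; each statement's English description precedes it below -/
import Mathlib

section
/- Let L be any positive definite lattice and h ∈ O(L) an isometry satisfying h² + h + 1 = 0. Then K = M + N is isometric to the tensor product A_2 ⊗ L. -/
/-!
The isometry is `a ⊗ v₁ + b ⊗ v₂ ↦ (a, a) + (h b, h² b)`. It lands in `M + N` and, as `h` is
invertible, `(y, h y)` is the image of `(0, h⁻¹ y)`, so it is onto `M + N`. The relation
`h + h² = -1` makes the cross terms `B(a, h d + h² d)` equal to `-B(a, d)`, while `h` preserves `B`,
which gives the Gram matrix `[[2, -1], [-1, 2]]`. For `(a, b)` in the kernel, `h b` is fixed by `h`,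
so `3 h b = 0`, and a positive definite lattice is torsion free.
-/

section Semiring

variable {R V W : Type*} [Semiring R] [AddCommMonoid V] [AddCommMonoid W] [Module R V] [Module R W]

def a2TensorMap (h : V →ₗ[R] V) : V × V →ₗ[R] V × V :=
  (LinearMap.fst R V V + h ∘ₗ LinearMap.snd R V V).prod
    (LinearMap.fst R V V + (h ∘ₗ h) ∘ₗ LinearMap.snd R V V)

@[simp]
lemma a2TensorMap_apply (h : V →ₗ[R] V) (p : V × V) :
    a2TensorMap h p = (p.1 + h p.2, p.1 + h (h p.2)) :=
  rfl

lemma Submodule.eq_graph_of_coe_eq {M : Submodule R (V × W)} {f : V →ₗ[R] W}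
    (hM : (M : Set (V × W)) = {p | ∃ x : V, p = (x, f x)}) : M = f.graph := by
  ext ⟨x, y⟩
  rw [← SetLike.mem_coe, hM, LinearMap.mem_graph_iff]
  simp

lemma range_a2TensorMap (h : V ≃ₗ[R] V) :
    LinearMap.range (a2TensorMap (h : V →ₗ[R] V)) = LinearMap.id.graph ⊔ (h : V →ₗ[R] V).graph := by
  apply le_antisymm
  · rintro _ ⟨⟨a, b⟩, rfl⟩
    have hdiag : ((a, a) : V × V) ∈ (LinearMap.id : V →ₗ[R] V).graph := rfl
    have hgraph : ((h b, h (h b)) : V × V) ∈ (h : V →ₗ[R] V).graph := rfl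
    simpa using Submodule.add_mem_sup hdiag hgraph
  · refine sup_le ?_ ?_
    · rintro ⟨x, y⟩ (hy : y = x)
      exact ⟨(x, 0), by simp [hy]⟩
    · rintro ⟨x, y⟩ (hy : y = h x)
      exact ⟨(0, h.symm x), by simp [hy]⟩

end Semiring

lemma a2TensorMap_injective {R V : Type*} [Semiring R] [AddCommGroup V] [Module R V]
    [IsAddTorsionFree V] {h : V →ₗ[R] V} (hcube : ∀ x : V, h (h x) + h x + x = 0) :
    Function.Injective (a2TensorMap h) := by
  rw [injective_iff_map_eq_zero]
  rintro ⟨a, b⟩ hab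
  obtain ⟨hfst, hsnd⟩ : a + h b = 0 ∧ a + h (h b) = 0 := by simpa using hab
  have hfix : h (h b) = h b := add_left_cancel (hsnd.trans hfst.symm)
  have hhb : h b = 0 := by
    refine (nsmul_eq_zero_iff_right three_ne_zero).mp ?_
    rw [← hcube (h b), hfix, hfix]
    abel
  have hb : b = 0 := by simpa [hfix, hhb] using hcube b
  have ha : a = 0 := by simpa [hhb] using hfst
  simp [ha, hb]

lemma a2TensorMap_isometry {R V S : Type*} [CommSemiring R] [AddCommGroup V] [Module R V]
    [CommRing S] [Module R S] (B : V →ₗ[R] V →ₗ[R] S) {h : V →ₗ[R] V}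
    (hisom : ∀ x y : V, B (h x) (h y) = B x y)
    (hcube : ∀ x : V, h (h x) + h x + x = 0) (p q : V × V) :
    B (a2TensorMap h p).1 (a2TensorMap h q).1 + B (a2TensorMap h p).2 (a2TensorMap h q).2 =
      2 * B p.1 q.1 - B p.1 q.2 - B p.2 q.1 + 2 * B p.2 q.2 := by
  have hsum (x : V) : h x + h (h x) = -x := by
    rw [add_comm]; exact eq_neg_of_add_eq_zero_left (hcube x)
  have hright : B p.1 (h q.2) + B p.1 (h (h q.2)) = -B p.1 q.2 := by
    rw [← map_add, hsum, map_neg]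
  have hleft : B (h p.2) q.1 + B (h (h p.2)) q.1 = -B p.2 q.1 := by
    rw [← LinearMap.add_apply, ← map_add, hsum, map_neg, LinearMap.neg_apply]
  have hsq : B (h (h p.2)) (h (h q.2)) = B p.2 q.2 := by rw [hisom, hisom]
  simp only [a2TensorMap_apply, map_add, LinearMap.add_apply]
  linear_combination hright + hleft + hisom p.2 q.2 + hsq

lemma LinearMap.isAddTorsionFree_of_anisotropic {R V S : Type*} [CommSemiring R]
    [AddCommGroup V] [Module R V] [AddCommGroup S] [Module R S] [IsAddTorsionFree S]
    (B : V →ₗ[R] V →ₗ[R] S) (hB : ∀ x, B x x = 0 → x = 0) : IsAddTorsionFree V := by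
  refine ⟨fun n hn a b hab => ?_⟩
  have hzero : n • (a - b) = 0 := by simpa [nsmul_sub, sub_eq_zero] using hab
  have hBzero : n • n • B (a - b) (a - b) = 0 := by
    rw [← map_nsmul, ← LinearMap.smul_apply, ← map_nsmul, hzero, map_zero]
  rw [nsmul_eq_zero_iff_right hn, nsmul_eq_zero_iff_right hn] at hBzero
  exact sub_eq_zero.mp (hB _ hBzero)

theorem stmt_7_general {L : Type*} [AddCommGroup L] [Module ℤ L]
    (B : L →ₗ[ℤ] L →ₗ[ℤ] ℚ)
    (hpos : ∀ x : L, x ≠ 0 → 0 < B x x)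
    (h : L ≃ₗ[ℤ] L)
    (hisom : ∀ x y : L, B (h x) (h y) = B x y)
    (hcube : ∀ x : L, h (h x) + h x + x = 0)
    (M N K : Submodule ℤ (L × L))
    (hM : (M : Set (L × L)) = {p | ∃ x : L, p = (x, x)})
    (hN : (N : Set (L × L)) = {p | ∃ x : L, p = (x, h x)})
    (hK : K = M ⊔ N) :
    ∃ e : K ≃ₗ[ℤ] L × L, ∀ v w : K,
      B (v : L × L).1 (w : L × L).1 + B (v : L × L).2 (w : L × L).2 =
        2 * B (e v).1 (e w).1 - B (e v).1 (e w).2 - B (e v).2 (e w).1 +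
          2 * B (e v).2 (e w).2 := by
  -- `Submodule ℤ (L × L)` elaborates with `AddCommGroup.toIntModule`, not with the given
  -- `ℤ`-module structure on `L`.
  obtain rfl : ‹Module ℤ L› = AddCommGroup.toIntModule L := Subsingleton.elim _ _
  have : IsAddTorsionFree L :=
    B.isAddTorsionFree_of_anisotropic fun x hx => by_contra fun hne => (hpos x hne).ne' hx
  obtain rfl := Submodule.eq_graph_of_coe_eq (f := LinearMap.id) hM
  obtain rfl := Submodule.eq_graph_of_coe_eq hN
  subst hK
  let g := (LinearEquiv.ofInjective _ (a2TensorMap_injective (h := (h : L →ₗ[ℤ] L)) hcube)).trans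
    (LinearEquiv.ofEq _ _ (range_a2TensorMap h))
  refine ⟨g.symm, fun v w => ?_⟩
  obtain ⟨p, rfl⟩ := g.surjective v
  obtain ⟨q, rfl⟩ := g.surjective w
  rw [g.symm_apply_apply, g.symm_apply_apply]
  exact a2TensorMap_isometry B hisom hcube p q

/-- If `h ∈ O(L)` satisfies `h² + h + 1 = 0`, then `K = M + N` is
isometric to `A₂ ⊗ L`.  Here `A₂ ⊗ L` is presented on the underlying group
`L × L` (via the basis `v₁, v₂` of `A₂`), with bilinear form
`((a,b),(c,d)) ↦ 2·B(a,c) - B(a,d) - B(b,c) + 2·B(b,d)`, i.e. the Kronecker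
product of the `A₂` Gram matrix `[[2,-1],[-1,2]]` with the form of `L`. -/
theorem stmt_7 {L : Type*} [AddCommGroup L] [Module ℤ L]
    (B : L →ₗ[ℤ] L →ₗ[ℤ] ℚ)
    (hsymm : ∀ x y : L, B x y = B y x)
    (hpos : ∀ x : L, x ≠ 0 → 0 < B x x)
    (h : L ≃ₗ[ℤ] L)
    (hisom : ∀ x y : L, B (h x) (h y) = B x y)
    (hcube : ∀ x : L, h (h x) + h x + x = 0)
    (M N K : Submodule ℤ (L × L))
    (hM : (M : Set (L × L)) = {p | ∃ x : L, p = (x, x)})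
    (hN : (N : Set (L × L)) = {p | ∃ x : L, p = (x, h x)})
    (hK : K = M ⊔ N) :
    ∃ e : K ≃ₗ[ℤ] L × L, ∀ v w : K,
      B (v : L × L).1 (w : L × L).1 + B (v : L × L).2 (w : L × L).2 =
        2 * B (e v).1 (e w).1 - B (e v).1 (e w).2 - B (e v).2 (e w).1 +
          2 * B (e v).2 (e w).2 :=
  stmt_7_general B hpos h hisom hcube M N K hM hN hK
end

section
/- Let L = Z² and let h be the reflection across the x-axis (h(e_1) = e_1, h(e_2) = -e_2). Then K = M + N is isometric to the rectangular lattice A_1³, i.e., √2·Z³. -/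
/-!
Every element of `K` is `(x, x) + (y, h y)`, i.e. `((a, b), (a, c))` with `b ≡ c (mod 2)`; writing
`b = p + q`, `c = p - q` identifies `K` with `ℤ³` via `(a, p, q) ↦ ((a, p + q), (a, p - q))`, and the
norm `2a² + (p + q)² + (p - q)² = 2 (a² + p² + q²)` is twice the standard one.
-/

/-- The standard dot product on `ℤⁿ`. -/
def dot {n : ℕ} (x y : Fin n → ℤ) : ℤ := ∑ i, x i * y i

/-- The dot product on `ℤⁿ ⊥ ℤⁿ`. -/
def dot2 {n : ℕ} (x y : (Fin n → ℤ) × (Fin n → ℤ)) : ℤ := dot x.1 y.1 + dot x.2 y.2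

def a1CubeEmbedding : (Fin 3 → ℤ) →ₗ[ℤ] (Fin 2 → ℤ) × (Fin 2 → ℤ) where
  toFun w := (![w 0, w 1 + w 2], ![w 0, w 1 - w 2])
  map_add' x y := by
    refine Prod.ext ?_ ?_ <;> funext i <;> fin_cases i <;> simp <;> ring
  map_smul' c x := by
    refine Prod.ext ?_ ?_ <;> funext i <;> fin_cases i <;> simp <;> ring

theorem dot2_a1CubeEmbedding (u v : Fin 3 → ℤ) :
    dot2 (a1CubeEmbedding u) (a1CubeEmbedding v) = 2 * dot u v := by
  simp [a1CubeEmbedding, dot, dot2, Fin.sum_univ_two, Fin.sum_univ_three]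
  ring

theorem a1CubeEmbedding_injective : Function.Injective a1CubeEmbedding := by
  intro u v huv
  have h0 : u 0 = v 0 := congrFun (congrArg Prod.fst huv) 0
  have hsum : u 1 + u 2 = v 1 + v 2 := congrFun (congrArg Prod.fst huv) 1
  have hdiff : u 1 - u 2 = v 1 - v 2 := congrFun (congrArg Prod.snd huv) 1
  funext i
  fin_cases i
  · exact h0
  · show u 1 = v 1; omega
  · show u 2 = v 2; omega

theorem range_a1CubeEmbedding (h : (Fin 2 → ℤ) →ₗ[ℤ] (Fin 2 → ℤ))
    (hh : ∀ x : Fin 2 → ℤ, h x = ![x 0, -x 1]) :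
    LinearMap.range a1CubeEmbedding =
      LinearMap.range (LinearMap.id.prod LinearMap.id) ⊔ LinearMap.range (LinearMap.id.prod h) := by
  apply le_antisymm
  · rintro _ ⟨w, rfl⟩
    refine Submodule.mem_sup.mpr ⟨_, ⟨![w 0, w 1], rfl⟩, _, ⟨![0, w 2], rfl⟩, ?_⟩
    refine Prod.ext ?_ ?_ <;> funext i <;> fin_cases i <;>
      simp [a1CubeEmbedding, hh, sub_eq_add_neg]
  · refine sup_le ?_ ?_
    · rintro _ ⟨x, rfl⟩
      refine ⟨![x 0, x 1, 0], ?_⟩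
      refine Prod.ext ?_ ?_ <;> funext i <;> fin_cases i <;> simp [a1CubeEmbedding]
    · rintro _ ⟨y, rfl⟩
      refine ⟨![y 0, 0, y 1], ?_⟩
      refine Prod.ext ?_ ?_ <;> funext i <;> fin_cases i <;> simp [a1CubeEmbedding, hh]

/-- For `L = ℤ²` and `h` the reflection across the x-axis
(`h e₁ = e₁`, `h e₂ = -e₂`), the lattice `K = M + N` is isometric to the
rectangular lattice `A₁³ = √2·ℤ³`. -/
theorem stmt_8
    (h : (Fin 2 → ℤ) →ₗ[ℤ] (Fin 2 → ℤ))
    (hh : ∀ x : Fin 2 → ℤ, h x = ![x 0, -x 1])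
    (M N K : Submodule ℤ ((Fin 2 → ℤ) × (Fin 2 → ℤ)))
    (hM : M = LinearMap.range ((LinearMap.id : (Fin 2 → ℤ) →ₗ[ℤ] (Fin 2 → ℤ)).prod LinearMap.id))
    (hN : N = LinearMap.range ((LinearMap.id : (Fin 2 → ℤ) →ₗ[ℤ] (Fin 2 → ℤ)).prod h))
    (hK : K = M ⊔ N) :
    ∃ e : K ≃ₗ[ℤ] (Fin 3 → ℤ), ∀ v w : K,
      dot2 (v : (Fin 2 → ℤ) × (Fin 2 → ℤ)) (w : (Fin 2 → ℤ) × (Fin 2 → ℤ)) =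
        2 * dot (e v) (e w) := by
  have hrange : LinearMap.range a1CubeEmbedding = K := by
    rw [hK, hM, hN, range_a1CubeEmbedding h hh]
  let e : (Fin 3 → ℤ) ≃ₗ[ℤ] K :=
    (LinearEquiv.ofInjective _ a1CubeEmbedding_injective).trans (LinearEquiv.ofEq _ _ hrange)
  refine ⟨e.symm, fun v w => ?_⟩
  have hcoe : ∀ u : K, (u : (Fin 2 → ℤ) × (Fin 2 → ℤ)) = a1CubeEmbedding (e.symm u) :=
    fun u => congrArg Subtype.val (e.apply_symm_apply u).symm
  rw [hcoe v, hcoe w, dot2_a1CubeEmbedding]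
end

section
/- Let L = A_2 with standard basis v_1, v_2 (norms 2, inner product -1), and let h be rotation by 60°: h(v_1) = v_1 + v_2, h(v_2) = -v_1. Then K = M + N equals the full lattice L ⊥ L. -/
/-- The `A₂` bilinear form in coordinates with respect to the standard basis
`v₁, v₂` (Gram matrix `[[2,-1],[-1,2]]`). -/
def A2form (x y : Fin 2 → ℤ) : ℤ :=
  2 * x 0 * y 0 - x 0 * y 1 - x 1 * y 0 + 2 * x 1 * y 1

/-!
Since `(x, x) + (y, h y) = (x + y, (x + y) + (h - 1) y)`, the sum of the diagonal and the graph
of `h` is all of `L ⊥ L` exactly when `h - 1` is surjective. For the rotation by 60° on `A₂`,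
`h - 1 = h²` is invertible because `h² - h + 1 = 0`.
-/

namespace LinearMap

variable {R V : Type*} [Ring R] [AddCommGroup V] [Module R V]

theorem range_prod_id_sup_range_prod_eq_top_iff (f : V →ₗ[R] V) :
    range ((id : V →ₗ[R] V).prod id) ⊔ range (id.prod f) = ⊤ ↔
      Function.Surjective ⇑(f - id : V →ₗ[R] V) := by
  rw [eq_top_iff]
  constructor
  · intro hK b
    obtain ⟨_, ⟨x, rfl⟩, _, ⟨y, rfl⟩, hxy⟩ :=
      Submodule.mem_sup.mp (hK (Submodule.mem_top : ((0 : V), b) ∈ ⊤))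
    obtain ⟨hx, hb⟩ : x + y = 0 ∧ x + f y = b := by simpa using hxy
    refine ⟨y, ?_⟩
    rw [sub_apply, id_apply, ← hb, eq_neg_of_add_eq_zero_left hx]
    abel
  · rintro hf ⟨a, b⟩ -
    obtain ⟨y, hy⟩ := hf (b - a)
    rw [sub_apply, id_apply] at hy
    refine Submodule.mem_sup.mpr ⟨(a - y, a - y), ⟨a - y, rfl⟩, (y, f y), ⟨y, rfl⟩, ?_⟩
    ext
    · exact sub_add_cancel a y
    · show a - y + f y = b
      calc a - y + f y = a + (f y - y) := by abel
        _ = b := by rw [hy, add_sub_cancel]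

end LinearMap

theorem sub_id_surjective_of_eq_rotation {h : (Fin 2 → ℤ) →ₗ[ℤ] (Fin 2 → ℤ)}
    (hh : ∀ x : Fin 2 → ℤ, h x = ![x 0 - x 1, x 0]) :
    Function.Surjective ⇑(h - LinearMap.id : (Fin 2 → ℤ) →ₗ[ℤ] (Fin 2 → ℤ)) := by
  intro z
  refine ⟨![z 1 - z 0, -z 0], ?_⟩
  ext i
  fin_cases i <;> simp [hh]

theorem stmt_10_general
    (h : (Fin 2 → ℤ) →ₗ[ℤ] (Fin 2 → ℤ))
    (hh : ∀ x : Fin 2 → ℤ, h x = ![x 0 - x 1, x 0])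
    (M N K : Submodule ℤ ((Fin 2 → ℤ) × (Fin 2 → ℤ)))
    (hM : M = LinearMap.range ((LinearMap.id : (Fin 2 → ℤ) →ₗ[ℤ] (Fin 2 → ℤ)).prod LinearMap.id))
    (hN : N = LinearMap.range ((LinearMap.id : (Fin 2 → ℤ) →ₗ[ℤ] (Fin 2 → ℤ)).prod h))
    (hK : K = M ⊔ N) :
    K = ⊤ := by
  subst hM hN hK
  exact (LinearMap.range_prod_id_sup_range_prod_eq_top_iff h).mpr
    (sub_id_surjective_of_eq_rotation hh)

/-- For `L = A₂` (coordinates w.r.t. the basis `v₁, v₂`) and `h`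
the rotation by 60° (`h v₁ = v₁ + v₂`, `h v₂ = -v₁`), the lattice `K = M + N`
is the full lattice `L ⊥ L`. -/
theorem stmt_10
    (h : (Fin 2 → ℤ) →ₗ[ℤ] (Fin 2 → ℤ))
    (hh : ∀ x : Fin 2 → ℤ, h x = ![x 0 - x 1, x 0])
    (hisom : ∀ x y : Fin 2 → ℤ, A2form (h x) (h y) = A2form x y)
    (M N K : Submodule ℤ ((Fin 2 → ℤ) × (Fin 2 → ℤ)))
    (hM : M = LinearMap.range ((LinearMap.id : (Fin 2 → ℤ) →ₗ[ℤ] (Fin 2 → ℤ)).prod LinearMap.id))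
    (hN : N = LinearMap.range ((LinearMap.id : (Fin 2 → ℤ) →ₗ[ℤ] (Fin 2 → ℤ)).prod h))
    (hK : K = M ⊔ N) :
    K = ⊤ :=
  stmt_10_general h hh M N K hM hN hK
end
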